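/- arXiv:2105.03153 — 5 statements merged into one kernel-verified Lean document; each statement's English description precedes it below -/
import Mathlib

section
/- There exists a dataset with 3 points and labels in {1,2,3}, group attribute in {0,1}, and a predictor f, such that f satisfies pairwise demographic parity on the dataset but not standard demographic parity. Concretely, take points with (label predictions, groups) given by f(x₁)=1, f(x₂)=2, f(x₃)=3 and a₁=0, a₂=1, a₃=0; then the counting-fraction versions of pairwise DP hold while standard DP fails. -/
/-!
Pairwise DP only has to be checked for groups that occur, which leaves finitely many cases. Inside
group `0 = {x₁, x₃}` the pairs are balanced by the symmetry `(i, j) ↦ (j, i)`, and across the groups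
`f(x₂) = 2` lies strictly between `f(x₁) = 1` and `f(x₃) = 3`, so pairwise DP holds. The label `2`,
however, occurs in group `1` only, so standard DP fails.
-/

open Finset

variable {ι α β : Type*} [Fintype ι] [DecidableEq β]

section Pairwise

variable [LinearOrder α]

def IsPairwiseDP (f : ι → α) (a : ι → β) : Prop :=
  ∀ aT aH : β,
    #{p : ι × ι | a p.1 = aT ∧ a p.2 = aH ∧ f p.2 < f p.1} =
      #{p : ι × ι | a p.1 = aT ∧ a p.2 = aH ∧ f p.1 < f p.2}

theorem isPairwiseDP_iff_forall_mem_range {f : ι → α} {a : ι → β} :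
    IsPairwiseDP f a ↔ ∀ aT ∈ Set.range a, ∀ aH ∈ Set.range a,
      #{p : ι × ι | a p.1 = aT ∧ a p.2 = aH ∧ f p.2 < f p.1} =
        #{p : ι × ι | a p.1 = aT ∧ a p.2 = aH ∧ f p.1 < f p.2} := by
  refine ⟨fun h aT _ aH _ ↦ h aT aH, fun h aT aH ↦ ?_⟩
  by_cases hT : aT ∈ Set.range a
  · by_cases hH : aH ∈ Set.range a
    · exact h aT hT aH hH
    · simp only [Set.mem_range, not_exists] at hH
      simp [hH]
  · simp only [Set.mem_range, not_exists] at hT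
    simp [hT]

theorem isPairwiseDP_example : IsPairwiseDP ![1, 2, 3] ![0, 1, 0] := by
  rw [isPairwiseDP_iff_forall_mem_range]
  simp only [Set.forall_mem_range]
  decide

end Pairwise

section Standard

variable [DecidableEq α]

def IsStandardDP (f : ι → α) (a : ι → β) : Prop :=
  ∀ (yT : α) (aT aH : β),
    (#{i | a i = aT ∧ f i = yT} : ℚ) / #{i | a i = aT} =
      (#{i | a i = aH ∧ f i = yT} : ℚ) / #{i | a i = aH}

/-- The group `aT` may be empty: the left side is then `0 / 0 = 0`. -/
theorem not_isStandardDP_of_label_missing_from_group {f : ι → α} {a : ι → β} {yT : α}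
    {aT aH : β} (hT : ∀ i, a i = aT → f i ≠ yT) (hH : ∃ i, a i = aH ∧ f i = yT) :
    ¬ IsStandardDP f a := by
  intro hDP
  have hzero : #{i | a i = aT ∧ f i = yT} = 0 := card_eq_zero.2 <| filter_eq_empty_iff.2 <|
    fun i _ hi ↦ hT i hi.1 hi.2
  have hnum : 0 < #{i | a i = aH ∧ f i = yT} := by
    obtain ⟨i, hi⟩ := hH
    exact card_pos.2 ⟨i, by simpa using hi⟩
  have hden : #{i | a i = aH ∧ f i = yT} ≤ #{i | a i = aH} :=
    card_le_card <| monotone_filter_right _ fun _ _ hi ↦ hi.1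
  have := hDP yT aT aH
  rw [hzero, Nat.cast_zero, zero_div] at this
  exact (div_pos (mod_cast hnum) (mod_cast hnum.trans_le hden)).ne this

theorem not_isStandardDP_example : ¬ IsStandardDP ![1, 2, 3] ![0, 1, 0] :=
  not_isStandardDP_of_label_missing_from_group (yT := 2) (aT := 0) (aH := 1)
    (by decide) ⟨1, rfl, rfl⟩

end Standard

/-- There is a 3-point dataset with labels in `{1,2,3}` and groups in `{0,1}`, namely
`f = (1,2,3)` and `a = (0,1,0)`, on which the counting-fraction version of pairwise
demographic parity holds while standard demographic parity fails. -/
theorem pairwise_DP_not_standard_DP :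
    ∃ (f a : Fin 3 → ℕ), f = ![1, 2, 3] ∧ a = ![0, 1, 0] ∧
      (∀ aT aH : ℕ,
        (univ.filter (fun p : Fin 3 × Fin 3 =>
            a p.1 = aT ∧ a p.2 = aH ∧ f p.2 < f p.1)).card =
        (univ.filter (fun p : Fin 3 × Fin 3 =>
            a p.1 = aT ∧ a p.2 = aH ∧ f p.1 < f p.2)).card) ∧
      ¬ (∀ (yT aT aH : ℕ),
          ((univ.filter (fun i : Fin 3 => a i = aT ∧ f i = yT)).card : ℚ) /
            ((univ.filter (fun i : Fin 3 => a i = aT)).card : ℚ) =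
          ((univ.filter (fun i : Fin 3 => a i = aH ∧ f i = yT)).card : ℚ) /
            ((univ.filter (fun i : Fin 3 => a i = aH)).card : ℚ)) :=
  ⟨_, _, rfl, rfl, isPairwiseDP_example, not_isStandardDP_example⟩
end

section
/- There exists a dataset of 9 points with labels in {1,2,3} and binary group attribute, and a predictor f, such that f satisfies equalized odds on the dataset but violates pairwise equal opportunity. Concretely, with datapoints (y, a) = (1,0),(2,0),(3,0),(3,0),(1,1),(2,1),(2,1),(3,1),(3,1) and predictions 1,2,3,2,1,2,2,3,2 respectively, empirical equalized odds holds but the empirical pairwise EO condition fails. -/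
/-!
Within each group, the prediction is `1` on label `1`, `2` on label `2`, and splits evenly
between `2` and `3` on label `3`, so the conditional distributions of the prediction agree
across groups. For ordered pairs from group `0` against group `1`, however, `5` of the `7`
pairs with the higher label first are ranked correctly, but `5` of the `6` pairs with the
lower label first.
-/

open Finset

namespace EqualizedOddsExample

def label : Fin 9 → ℕ := ![1, 2, 3, 3, 1, 2, 2, 3, 3]

def group : Fin 9 → ℕ := ![0, 0, 0, 0, 1, 1, 1, 1, 1]

def prediction : Fin 9 → ℕ := ![1, 2, 3, 2, 1, 2, 2, 3, 2]

def cellCount (aT yT : ℕ) : ℕ := #{i | group i = aT ∧ label i = yT}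

def hitCount (aT yT yH : ℕ) : ℕ := #{i | group i = aT ∧ label i = yT ∧ prediction i = yH}

lemma eq_iff_eq_min_of_lt {n N : ℕ} (c : ℕ) (h : n < N) : n = c ↔ n = min c N := by
  omega

lemma group_lt (i : Fin 9) : group i < 2 := by fin_cases i <;> decide

lemma label_lt (i : Fin 9) : label i < 4 := by fin_cases i <;> decide

lemma prediction_lt (i : Fin 9) : prediction i < 4 := by fin_cases i <;> decide

lemma cellCount_eq_min (aT yT : ℕ) : cellCount aT yT = cellCount (min aT 2) (min yT 4) := by
  refine congrArg card (filter_congr fun i _ => ?_)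
  rw [eq_iff_eq_min_of_lt aT (group_lt i), eq_iff_eq_min_of_lt yT (label_lt i)]

lemma hitCount_eq_min (aT yT yH : ℕ) :
    hitCount aT yT yH = hitCount (min aT 2) (min yT 4) (min yH 4) := by
  refine congrArg card (filter_congr fun i _ => ?_)
  rw [eq_iff_eq_min_of_lt aT (group_lt i), eq_iff_eq_min_of_lt yT (label_lt i),
    eq_iff_eq_min_of_lt yH (prediction_lt i)]

lemma hitCount_mul_cellCount_comm (aT aH yT yH : ℕ) :
    hitCount aT yT yH * cellCount aH yT = hitCount aH yT yH * cellCount aT yT := by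
  -- Values beyond the range of the data select no point, so clamping reduces this to a finite check.
  have bounded : ∀ aT < 3, ∀ aH < 3, ∀ yT < 5, ∀ yH < 5,
      hitCount aT yT yH * cellCount aH yT = hitCount aH yT yH * cellCount aT yT := by
    decide
  rw [hitCount_eq_min aT, hitCount_eq_min aH, cellCount_eq_min aT, cellCount_eq_min aH]
  exact bounded _ (by omega) _ (by omega) _ (by omega) _ (by omega)

lemma pairwise_rates_ne :
    (#{p : Fin 9 × Fin 9 | group p.1 = 0 ∧ group p.2 = 1 ∧ label p.2 < label p.1 ∧
        prediction p.2 < prediction p.1} : ℚ) /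
      #{p : Fin 9 × Fin 9 | group p.1 = 0 ∧ group p.2 = 1 ∧ label p.2 < label p.1} ≠
    (#{p : Fin 9 × Fin 9 | group p.1 = 0 ∧ group p.2 = 1 ∧ label p.1 < label p.2 ∧
        prediction p.1 < prediction p.2} : ℚ) /
      #{p : Fin 9 × Fin 9 | group p.1 = 0 ∧ group p.2 = 1 ∧ label p.1 < label p.2} := by
  have correct_down :
      #{p : Fin 9 × Fin 9 | group p.1 = 0 ∧ group p.2 = 1 ∧ label p.2 < label p.1 ∧
        prediction p.2 < prediction p.1} = 5 := by decide
  have pairs_down :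
      #{p : Fin 9 × Fin 9 | group p.1 = 0 ∧ group p.2 = 1 ∧ label p.2 < label p.1} = 7 := by
    decide
  have correct_up :
      #{p : Fin 9 × Fin 9 | group p.1 = 0 ∧ group p.2 = 1 ∧ label p.1 < label p.2 ∧
        prediction p.1 < prediction p.2} = 5 := by decide
  have pairs_up :
      #{p : Fin 9 × Fin 9 | group p.1 = 0 ∧ group p.2 = 1 ∧ label p.1 < label p.2} = 6 := by
    decide
  rw [correct_down, pairs_down, correct_up, pairs_up]
  norm_num

end EqualizedOddsExample

/-- There is a 9-point dataset with labels in `{1,2,3}` and binary groups, and a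
predictor, such that empirical equalized odds holds (for all nonempty conditioning
sets) while the empirical pairwise equal-opportunity condition fails. -/
theorem equalized_odds_not_pairwise_EO :
    ∃ (y a f : Fin 9 → ℕ),
      y = ![1, 2, 3, 3, 1, 2, 2, 3, 3] ∧
      a = ![0, 0, 0, 0, 1, 1, 1, 1, 1] ∧
      f = ![1, 2, 3, 2, 1, 2, 2, 3, 2] ∧
      -- empirical equalized odds
      (∀ (yT yH aT aH : ℕ),
        (univ.filter (fun i : Fin 9 => a i = aT ∧ y i = yT)).Nonempty →
        (univ.filter (fun i : Fin 9 => a i = aH ∧ y i = yT)).Nonempty →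
        ((univ.filter (fun i : Fin 9 => a i = aT ∧ y i = yT ∧ f i = yH)).card : ℚ) /
          ((univ.filter (fun i : Fin 9 => a i = aT ∧ y i = yT)).card : ℚ) =
        ((univ.filter (fun i : Fin 9 => a i = aH ∧ y i = yT ∧ f i = yH)).card : ℚ) /
          ((univ.filter (fun i : Fin 9 => a i = aH ∧ y i = yT)).card : ℚ)) ∧
      -- empirical pairwise EO fails
      ¬ (∀ aT aH : ℕ,
          ((univ.filter (fun p : Fin 9 × Fin 9 =>
              a p.1 = aT ∧ a p.2 = aH ∧ y p.2 < y p.1 ∧ f p.2 < f p.1)).card : ℚ) /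
            ((univ.filter (fun p : Fin 9 × Fin 9 =>
              a p.1 = aT ∧ a p.2 = aH ∧ y p.2 < y p.1)).card : ℚ) =
          ((univ.filter (fun p : Fin 9 × Fin 9 =>
              a p.1 = aT ∧ a p.2 = aH ∧ y p.1 < y p.2 ∧ f p.1 < f p.2)).card : ℚ) /
            ((univ.filter (fun p : Fin 9 × Fin 9 =>
              a p.1 = aT ∧ a p.2 = aH ∧ y p.1 < y p.2)).card : ℚ)) := by
  open EqualizedOddsExample in
  refine ⟨label, group, prediction, rfl, rfl, rfl, ?_, fun h => pairwise_rates_ne (h 0 1)⟩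
  intro yT yH aT aH hT hH
  rw [div_eq_div_iff (by exact_mod_cast hT.card_ne_zero) (by exact_mod_cast hH.card_ne_zero)]
  exact_mod_cast EqualizedOddsExample.hitCount_mul_cellCount_comm aT aH yT yH
end

section
/- In the T-shirt example: for the family of predictions parameterized by n ≥ 1 (Vendor A has one 1-star, n 2-star, and two 3-star shirts; Vendor B has one 1-star, one 2-star, and 2n 3-star shirts; all predictions are correct except that exactly half of each vendor's 3-star shirts are predicted as 2 stars — one of Vendor A's two and n of Vendor B's 2n), the empirical pairwise-EO probabilities are P[pred_A > pred_B | true_A > true_B] = (n+3)/(n+4) and P[pred_A < pred_B | true_A < true_B] = (1+2n+n²)/(1+2n+2n²), and hence the empirical EOviol tends to 1/2 as n → ∞. -/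
open Finset

/-- True labels of Vendor A's shirts: one 1-star, `n` 2-star, two 3-star. -/
def tshirtTrueA (n : ℕ) (i : Fin (n + 3)) : ℕ :=
  if (i : ℕ) = 0 then 1 else if (i : ℕ) ≤ n then 2 else 3

/-- Predictions for Vendor A: correct except one of the two 3-star shirts gets 2. -/
def tshirtPredA (n : ℕ) (i : Fin (n + 3)) : ℕ :=
  if (i : ℕ) = n + 1 then 2 else tshirtTrueA n i

/-- True labels of Vendor B's shirts: one 1-star, one 2-star, `2n` 3-star. -/
def tshirtTrueB (n : ℕ) (i : Fin (2 * n + 2)) : ℕ :=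
  if (i : ℕ) = 0 then 1 else if (i : ℕ) = 1 then 2 else 3

/-- Predictions for Vendor B: correct except `n` of the `2n` 3-star shirts get 2. -/
def tshirtPredB (n : ℕ) (i : Fin (2 * n + 2)) : ℕ :=
  if 2 ≤ (i : ℕ) ∧ (i : ℕ) ≤ n + 1 then 2 else tshirtTrueB n i

/-- Fraction of (A-shirt, B-shirt) pairs with strictly larger A ground truth on which
the A prediction is strictly larger. -/
noncomputable def tshirtFracGT (n : ℕ) : ℚ :=
  ((univ.filter (fun q : Fin (n + 3) × Fin (2 * n + 2) =>
      tshirtTrueB n q.2 < tshirtTrueA n q.1 ∧ tshirtPredB n q.2 < tshirtPredA n q.1)).card : ℚ) /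
    ((univ.filter (fun q : Fin (n + 3) × Fin (2 * n + 2) =>
      tshirtTrueB n q.2 < tshirtTrueA n q.1)).card : ℚ)

/-- Fraction of (A-shirt, B-shirt) pairs with strictly smaller A ground truth on which
the A prediction is strictly smaller. -/
noncomputable def tshirtFracLT (n : ℕ) : ℚ :=
  ((univ.filter (fun q : Fin (n + 3) × Fin (2 * n + 2) =>
      tshirtTrueA n q.1 < tshirtTrueB n q.2 ∧ tshirtPredA n q.1 < tshirtPredB n q.2)).card : ℚ) /
    ((univ.filter (fun q : Fin (n + 3) × Fin (2 * n + 2) =>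
      tshirtTrueA n q.1 < tshirtTrueB n q.2)).card : ℚ)

/-! Each vendor's shirts are indexed so that equal labels (true or predicted) are consecutive,
so each of the four sets of pairs in the two ratios is a disjoint union of two rectangles of
index pairs, of sizes `n + 4`, `n + 3`, `1 + 2n + 2n²` and `1 + 2n + n²`. The two ratios then tend to `1` and `1/2`. -/

open Filter Topology

lemma card_filter_finProd_eq_card {a b : ℕ} (P : Fin a × Fin b → Prop) [DecidablePred P]
    (s : Finset (ℕ × ℕ)) (hP : ∀ q : Fin a × Fin b, P q ↔ ((q.1 : ℕ), (q.2 : ℕ)) ∈ s)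
    (hs : ∀ p ∈ s, p.1 < a ∧ p.2 < b) :
    #(univ.filter P) = #s := by
  refine card_bij (fun q _ => ((q.1 : ℕ), (q.2 : ℕ))) (fun q hq => (hP q).1 (mem_filter.1 hq).2)
    (fun q₁ _ q₂ _ h => ?_) (fun p hp => ?_)
  · simp only [Prod.mk.injEq] at h
    exact Prod.ext (Fin.ext h.1) (Fin.ext h.2)
  · obtain ⟨ha, hb⟩ := hs p hp
    exact ⟨(⟨p.1, ha⟩, ⟨p.2, hb⟩), mem_filter.2 ⟨mem_univ _, (hP _).2 hp⟩, rfl⟩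

lemma card_Icc_prod_union_Icc_prod {i₁ i₂ i₃ i₄ j₁ j₂ j₃ j₄ : ℕ} (h : i₂ < i₃) :
    #(Icc i₁ i₂ ×ˢ Icc j₁ j₂ ∪ Icc i₃ i₄ ×ˢ Icc j₃ j₄) =
      (i₂ + 1 - i₁) * (j₂ + 1 - j₁) + (i₄ + 1 - i₃) * (j₄ + 1 - j₃) := by
  rw [card_union_of_disjoint, card_product, card_product, Nat.card_Icc, Nat.card_Icc,
    Nat.card_Icc, Nat.card_Icc]
  rw [disjoint_left]
  rintro ⟨i, j⟩ h₁ h₂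
  simp only [mem_product, mem_Icc] at h₁ h₂
  omega

lemma card_trueGT (n : ℕ) :
    #(univ.filter fun q : Fin (n + 3) × Fin (2 * n + 2) =>
      tshirtTrueB n q.2 < tshirtTrueA n q.1) = n + 4 := by
  rw [card_filter_finProd_eq_card _ (Icc 1 n ×ˢ Icc 0 0 ∪ Icc (n + 1) (n + 2) ×ˢ Icc 0 1),
    card_Icc_prod_union_Icc_prod (by omega)]
  · omega
  · rintro ⟨i, j⟩
    simp only [tshirtTrueA, tshirtTrueB, mem_union, mem_product, mem_Icc]
    split_ifs <;> omega
  · rintro ⟨i, j⟩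
    simp only [mem_union, mem_product, mem_Icc]
    omega

lemma card_predGT (n : ℕ) :
    #(univ.filter fun q : Fin (n + 3) × Fin (2 * n + 2) =>
      tshirtTrueB n q.2 < tshirtTrueA n q.1 ∧ tshirtPredB n q.2 < tshirtPredA n q.1) = n + 3 := by
  rw [card_filter_finProd_eq_card _ (Icc 1 (n + 1) ×ˢ Icc 0 0 ∪ Icc (n + 2) (n + 2) ×ˢ Icc 0 1),
    card_Icc_prod_union_Icc_prod (by omega)]
  · omega
  · rintro ⟨i, j⟩
    simp only [tshirtTrueA, tshirtTrueB, tshirtPredA, tshirtPredB, mem_union, mem_product, mem_Icc]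
    split_ifs <;> omega
  · rintro ⟨i, j⟩
    simp only [mem_union, mem_product, mem_Icc]
    omega

lemma card_trueLT (n : ℕ) :
    #(univ.filter fun q : Fin (n + 3) × Fin (2 * n + 2) =>
      tshirtTrueA n q.1 < tshirtTrueB n q.2) = 1 + 2 * n + 2 * n ^ 2 := by
  rw [card_filter_finProd_eq_card _ (Icc 0 0 ×ˢ Icc 1 (2 * n + 1) ∪ Icc 1 n ×ˢ Icc 2 (2 * n + 1)),
    card_Icc_prod_union_Icc_prod (by omega)]
  · simp only [Nat.add_sub_cancel, show 2 * n + 1 + 1 - 2 = 2 * n by omega]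
    ring
  · rintro ⟨i, j⟩
    simp only [tshirtTrueA, tshirtTrueB, mem_union, mem_product, mem_Icc]
    split_ifs <;> omega
  · rintro ⟨i, j⟩
    simp only [mem_union, mem_product, mem_Icc]
    omega

lemma card_predLT (n : ℕ) :
    #(univ.filter fun q : Fin (n + 3) × Fin (2 * n + 2) =>
      tshirtTrueA n q.1 < tshirtTrueB n q.2 ∧ tshirtPredA n q.1 < tshirtPredB n q.2) =
      1 + 2 * n + n ^ 2 := by
  rw [card_filter_finProd_eq_card _
      (Icc 0 0 ×ˢ Icc 1 (2 * n + 1) ∪ Icc 1 n ×ˢ Icc (n + 2) (2 * n + 1)),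
    card_Icc_prod_union_Icc_prod (by omega)]
  · simp only [Nat.add_sub_cancel, show 2 * n + 1 + 1 - (n + 2) = n by omega]
    ring
  · rintro ⟨i, j⟩
    simp only [tshirtTrueA, tshirtTrueB, tshirtPredA, tshirtPredB, mem_union, mem_product, mem_Icc]
    split_ifs <;> omega
  · rintro ⟨i, j⟩
    simp only [mem_union, mem_product, mem_Icc]
    omega

lemma tshirtFracGT_eq (n : ℕ) : tshirtFracGT n = ((n : ℚ) + 3) / ((n : ℚ) + 4) := by
  rw [tshirtFracGT, card_predGT, card_trueGT]
  push_cast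
  rfl

lemma tshirtFracLT_eq (n : ℕ) :
    tshirtFracLT n = (1 + 2 * (n : ℚ) + (n : ℚ) ^ 2) / (1 + 2 * (n : ℚ) + 2 * (n : ℚ) ^ 2) := by
  rw [tshirtFracLT, card_predLT, card_trueLT]
  push_cast
  rfl

lemma tendsto_tshirtFracGT : Tendsto (fun n => (tshirtFracGT n : ℝ)) atTop (𝓝 1) := by
  simpa [tshirtFracGT_eq, add_comm] using
    tendsto_add_mul_div_add_mul_atTop_nhds (3 : ℝ) 4 1 one_ne_zero

lemma tendsto_tshirtFracLT : Tendsto (fun n => (tshirtFracLT n : ℝ)) atTop (𝓝 (1 / 2)) := by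
  -- dividing numerator and denominator by `n ^ 2` turns the ratio into a function of `1 / n`
  have hg : ContinuousAt (fun x : ℝ => (x ^ 2 + 2 * x + 1) / (x ^ 2 + 2 * x + 2)) 0 := by
    fun_prop (disch := norm_num)
  have hlim := hg.tendsto.comp tendsto_inv_atTop_nhds_zero_nat
  norm_num at hlim
  refine hlim.congr' ?_
  filter_upwards [eventually_ne_atTop 0] with n hn
  have : (n : ℝ) ≠ 0 := Nat.cast_ne_zero.2 hn
  rw [Function.comp_apply, tshirtFracLT_eq]
  push_cast
  field_simp

/-- T-shirt example: the empirical pairwise-EO probabilities are `(n+3)/(n+4)` and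
`(1+2n+n²)/(1+2n+2n²)`, and the empirical EO violation tends to `1/2` as `n → ∞`. -/
theorem tshirt_example :
    (∀ n : ℕ, 1 ≤ n →
      tshirtFracGT n = ((n : ℚ) + 3) / ((n : ℚ) + 4) ∧
      tshirtFracLT n = (1 + 2 * (n : ℚ) + (n : ℚ) ^ 2) / (1 + 2 * (n : ℚ) + 2 * (n : ℚ) ^ 2)) ∧
    Filter.Tendsto (fun n : ℕ => |((tshirtFracGT n : ℝ)) - ((tshirtFracLT n : ℝ))|)
      Filter.atTop (nhds (1 / 2)) := by
  refine ⟨fun n _ => ⟨tshirtFracGT_eq n, tshirtFracLT_eq n⟩, ?_⟩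
  have h := (tendsto_tshirtFracGT.sub tendsto_tshirtFracLT).abs
  norm_num at h
  exact h
end

section
/- Lemma (fairness needed in scoring step, DP case, lower bound construction): Consider the dataset of n = 2m+1 points in ℝ² × [4] × {0,1} with x₁ = (1,3), y₁ = 1, a₁ = 0; xᵢ = (i,2), yᵢ = 2, aᵢ = 1 for 2 ≤ i ≤ m+1; and xᵢ = (i,4), yᵢ = 4, aᵢ = 1 for m+2 ≤ i ≤ 2m+1. Among predictors obtained by thresholding the projection p₁(u₁,u₂) = u₁ subject to exact empirical pairwise DP on this dataset, every such predictor must be constant, so the best achievable MAE is at least 1; whereas thresholding the projection p₂(u₁,u₂) = u₂ with thresholds θ₁ = 0, θ₂ = 2.5, θ₃ = 3.5 yields a predictor satisfying empirical pairwise DP with MAE = 2/(2m+1). -/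
/-!
The scores `p₁` increase with the index and the only group-0 point has the smallest index, so a
threshold predictor on `p₁` never ranks the group-0 point above a group-1 point. Pairwise DP then
forbids ranking it below one as well, so the predictor is constant, and a constant label `c`
costs `|1 - c| + m |2 - c| + m |4 - c| ≥ 2m + 1`. The predictor on `p₂` labels the group-0 point
`3`, between the `m` group-1 points labelled `2` and the `m` labelled `4`, so the pairs balance,
and it errs only on that point, by `2`.
-/

open Finset

/-- The datapoints of the DP-case construction: `x₁ = (1,3)`, `xᵢ = (i,2)` for
`2 ≤ i ≤ m+1`, `xᵢ = (i,4)` for `m+2 ≤ i ≤ 2m+1` (0-indexed here). -/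
noncomputable def lemX (m : ℕ) (i : Fin (2 * m + 1)) : ℝ × ℝ :=
  if (i : ℕ) = 0 then (1, 3)
  else if (i : ℕ) ≤ m then ((i : ℕ) + 1, 2) else ((i : ℕ) + 1, 4)

/-- Labels: `y₁ = 1`; `yᵢ = 2` for `2 ≤ i ≤ m+1`; `yᵢ = 4` for `m+2 ≤ i ≤ 2m+1`. -/
def lemY (m : ℕ) (i : Fin (2 * m + 1)) : ℕ :=
  if (i : ℕ) = 0 then 1 else if (i : ℕ) ≤ m then 2 else 4

/-- Groups: `a₁ = 0`, all other points have `a = 1`. -/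
def lemA (m : ℕ) (i : Fin (2 * m + 1)) : ℕ := if (i : ℕ) = 0 then 0 else 1

/-- Threshold predictor with labels in `{1,2,3,4}` given thresholds `θ₁ ≤ θ₂ ≤ θ₃`. -/
noncomputable def thrPred (θ₁ θ₂ θ₃ : ℝ) (s : ℝ) : ℕ :=
  if s ≤ θ₁ then 1 else if s ≤ θ₂ then 2 else if s ≤ θ₃ then 3 else 4

/-- Empirical pairwise DP of a predictor on the dataset (counting version): the number
of cross-group ordered pairs where the group-0 point's prediction is larger equals the
number where it is smaller. -/
def lemPairDP (m : ℕ) (f : Fin (2 * m + 1) → ℕ) : Prop :=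
  (univ.filter (fun p : Fin (2 * m + 1) × Fin (2 * m + 1) =>
      lemA m p.1 = 0 ∧ lemA m p.2 = 1 ∧ f p.2 < f p.1)).card =
  (univ.filter (fun p : Fin (2 * m + 1) × Fin (2 * m + 1) =>
      lemA m p.1 = 0 ∧ lemA m p.2 = 1 ∧ f p.1 < f p.2)).card

/-- Mean absolute error of a predictor on the dataset. -/
def lemMAE (m : ℕ) (f : Fin (2 * m + 1) → ℕ) : ℚ :=
  (∑ i, |(lemY m i : ℚ) - (f i : ℚ)|) / (2 * (m : ℚ) + 1)

theorem thrPred_monotone (θ₁ θ₂ θ₃ : ℝ) : Monotone (thrPred θ₁ θ₂ θ₃) := by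
  intro s t hst
  unfold thrPred
  split_ifs <;> first | omega | linarith

section Blocks

variable {α β γ : Type*} (m : ℕ)

def onBlocks (a b c : α) (i : Fin (2 * m + 1)) : α :=
  if (i : ℕ) = 0 then a else if (i : ℕ) ≤ m then b else c

variable {m}

theorem onBlocks_self (a : α) : onBlocks m a a a = fun _ => a := by
  funext i
  unfold onBlocks
  split_ifs <;> rfl

theorem onBlocks_zero (a b c : α) : onBlocks m a b c 0 = a := rfl

theorem apply_onBlocks (g : α → β) (a b c : α) (i : Fin (2 * m + 1)) :
    g (onBlocks m a b c i) = onBlocks m (g a) (g b) (g c) i := by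
  unfold onBlocks
  split_ifs <;> rfl

theorem apply_onBlocks₂ (g : α → β → γ) (a b c : α) (a' b' c' : β) (i : Fin (2 * m + 1)) :
    g (onBlocks m a b c i) (onBlocks m a' b' c' i) = onBlocks m (g a a') (g b b') (g c c') i := by
  unfold onBlocks
  split_ifs <;> rfl

theorem sum_onBlocks [AddCommMonoid α] (a b c : α) :
    ∑ i, onBlocks m a b c i = a + m • b + m • c := by
  have hlow : ∀ i ∈ range m, (if i + 1 = 0 then a else if i + 1 ≤ m then b else c) = b :=
    fun i hi => by simp [show i + 1 ≤ m from mem_range.1 hi]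
  have hhigh : ∀ i ∈ range m,
      (if m + i + 1 = 0 then a else if m + i + 1 ≤ m then b else c) = c :=
    fun i _ => by simp
  unfold onBlocks
  rw [Fin.sum_univ_eq_sum_range (fun i => if i = 0 then a else if i ≤ m then b else c),
    sum_range_succ', two_mul, sum_range_add, sum_congr rfl hlow, sum_congr rfl hhigh]
  simp only [sum_const, card_range, if_pos]
  abel

theorem card_filter_onBlocks (P : α → Prop) [DecidablePred P] (a b c : α) :
    #{i | P (onBlocks m a b c i)} =
      (if P a then 1 else 0) + m * (if P b then 1 else 0) + m * (if P c then 1 else 0) := by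
  simp_rw [card_filter, apply_onBlocks (fun x => if P x then 1 else 0), sum_onBlocks, smul_eq_mul]

end Blocks

section Dataset

variable {m : ℕ}

theorem lemY_eq_onBlocks : lemY m = onBlocks m 1 2 4 := rfl

theorem fst_lemX (i : Fin (2 * m + 1)) : (lemX m i).1 = (i : ℕ) + 1 := by
  unfold lemX
  split_ifs with h <;> simp [h]

theorem snd_lemX (i : Fin (2 * m + 1)) : (lemX m i).2 = onBlocks m 3 2 4 i := by
  unfold lemX onBlocks
  split_ifs <;> rfl

theorem lemA_eq_zero_iff (i : Fin (2 * m + 1)) : lemA m i = 0 ↔ i = 0 := by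
  unfold lemA
  split_ifs with h <;> simp [h, Fin.ext_iff]

theorem lemA_eq_one_iff (i : Fin (2 * m + 1)) : lemA m i = 1 ↔ i ≠ 0 := by
  unfold lemA
  split_ifs with h <;> simp [h, Fin.ext_iff]

end Dataset

section PairwiseDP

variable {m : ℕ}

theorem card_crossGroupPairs (R : ℕ → ℕ → Prop) [DecidableRel R] (hR : ∀ a, ¬ R a a)
    (f : Fin (2 * m + 1) → ℕ) :
    #{p : Fin (2 * m + 1) × Fin (2 * m + 1) | lemA m p.1 = 0 ∧ lemA m p.2 = 1 ∧ R (f p.1) (f p.2)}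
      = #{j | R (f 0) (f j)} := by
  rw [← card_map (Function.Embedding.sectR (0 : Fin (2 * m + 1)) (Fin (2 * m + 1)))]
  refine congrArg card (ext fun ⟨i, j⟩ => ?_)
  simp only [mem_filter, mem_univ, true_and, mem_map, Function.Embedding.sectR_apply,
    Prod.mk.injEq, lemA_eq_zero_iff, lemA_eq_one_iff]
  constructor
  · rintro ⟨rfl, -, hR0⟩
    exact ⟨j, hR0, rfl, rfl⟩
  · rintro ⟨j, hR0, rfl, rfl⟩
    exact ⟨rfl, fun h => hR _ (h ▸ hR0), hR0⟩

theorem lemPairDP_iff (f : Fin (2 * m + 1) → ℕ) :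
    lemPairDP m f ↔ #{j | f j < f 0} = #{j | f 0 < f j} := by
  unfold lemPairDP
  rw [card_crossGroupPairs (fun a b => b < a) (fun a => lt_irrefl a),
    card_crossGroupPairs (· < ·) (fun a => lt_irrefl a)]

theorem eq_apply_zero_of_monotone_of_lemPairDP {f : Fin (2 * m + 1) → ℕ} (hf : Monotone f)
    (hdp : lemPairDP m f) (j : Fin (2 * m + 1)) : f j = f 0 := by
  have hnone_below : #{j | f j < f 0} = 0 :=
    card_eq_zero.2 (filter_eq_empty_iff.2 fun j _ => (hf (Fin.zero_le j)).not_gt)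
  rw [lemPairDP_iff, hnone_below, eq_comm, card_eq_zero, filter_eq_empty_iff] at hdp
  exact le_antisymm (not_lt.1 (hdp (mem_univ j))) (hf (Fin.zero_le j))

end PairwiseDP

section MeanAbsoluteError

variable {m : ℕ}

theorem lemMAE_onBlocks (p q r : ℕ) :
    lemMAE m (onBlocks m p q r) =
      (|1 - (p : ℚ)| + m * |2 - (q : ℚ)| + m * |4 - (r : ℚ)|) / (2 * m + 1) := by
  unfold lemMAE
  rw [lemY_eq_onBlocks]
  simp_rw [apply_onBlocks₂ (fun y p : ℕ => |(y : ℚ) - p|), sum_onBlocks, nsmul_eq_mul]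
  norm_num

theorem one_le_lemMAE_const (hm : 1 ≤ m) (c : ℕ) : 1 ≤ lemMAE m (fun _ => c) := by
  rw [← onBlocks_self, lemMAE_onBlocks, le_div_iff₀ (by positivity)]
  have hm' : (1 : ℚ) ≤ m := by exact_mod_cast hm
  have hspread : (2 : ℚ) ≤ |2 - (c : ℚ)| + |4 - (c : ℚ)| := by
    linarith [neg_le_abs (2 - (c : ℚ)), le_abs_self (4 - (c : ℚ))]
  have hcases : (1 : ℚ) ≤ |1 - (c : ℚ)| ∨ 4 ≤ |2 - (c : ℚ)| + |4 - (c : ℚ)| := by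
    rcases le_or_gt c 1 with hc | hc
    · have hx : (c : ℚ) ≤ 1 := by exact_mod_cast hc
      exact Or.inr (by linarith [le_abs_self (2 - (c : ℚ)), le_abs_self (4 - (c : ℚ))])
    · have hx : 2 ≤ (c : ℚ) := by exact_mod_cast hc
      exact Or.inl (by linarith [neg_le_abs (1 - (c : ℚ))])
  rcases hcases with h | h <;> nlinarith [abs_nonneg (1 - (c : ℚ))]

end MeanAbsoluteError

theorem monotone_thrPred_fst_lemX (m : ℕ) (θ₁ θ₂ θ₃ : ℝ) :
    Monotone fun i : Fin (2 * m + 1) => thrPred θ₁ θ₂ θ₃ (lemX m i).1 :=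
  (thrPred_monotone θ₁ θ₂ θ₃).comp fun i j hij => by
    simp only [fst_lemX, add_le_add_iff_right, Nat.cast_le]
    exact hij

theorem thrPred_snd_lemX (m : ℕ) :
    (fun i => thrPred 0 2.5 3.5 (lemX m i).2) = onBlocks m 3 2 4 := by
  funext i
  rw [snd_lemX, apply_onBlocks (thrPred 0 2.5 3.5)]
  norm_num [thrPred]

/-- Lemma (fairness needed in the scoring step, DP case): on the dataset above, any
threshold predictor on the first-coordinate scoring function `p₁` that satisfies
empirical pairwise DP has MAE at least 1, while the second-coordinate scoring
function `p₂` with thresholds `0, 2.5, 3.5` yields a predictor satisfying empirical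
pairwise DP with MAE `2/(2m+1)`. -/
theorem fairness_needed_in_scoring_step_DP (m : ℕ) (hm : 1 ≤ m) :
    (∀ θ₁ θ₂ θ₃ : ℝ, θ₁ ≤ θ₂ → θ₂ ≤ θ₃ →
      lemPairDP m (fun i => thrPred θ₁ θ₂ θ₃ (lemX m i).1) →
      1 ≤ lemMAE m (fun i => thrPred θ₁ θ₂ θ₃ (lemX m i).1)) ∧
    lemPairDP m (fun i => thrPred 0 2.5 3.5 (lemX m i).2) ∧
    lemMAE m (fun i => thrPred 0 2.5 3.5 (lemX m i).2) = 2 / (2 * (m : ℚ) + 1) := by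
  refine ⟨fun θ₁ θ₂ θ₃ _ _ hdp => ?_, ?_, ?_⟩
  · have hconst := eq_apply_zero_of_monotone_of_lemPairDP
      (monotone_thrPred_fst_lemX m θ₁ θ₂ θ₃) hdp
    rw [funext hconst]
    exact one_le_lemMAE_const hm _
  · rw [thrPred_snd_lemX, lemPairDP_iff, onBlocks_zero]
    simp only [card_filter_onBlocks (· < 3), card_filter_onBlocks (3 < ·)]
    norm_num
  · rw [thrPred_snd_lemX, lemMAE_onBlocks]
    norm_num
end

section
/- For a threshold predictor f over k ordered labels constructed from scoring function s and thresholds θ, the empirical objective decomposes under a single right-move of one threshold: if threshold θ_{i₀} located at the sorted score s(x_j) is moved to s(x_{j+1}) (yielding θ′), then exactly one datapoint (namely x_{j+1}) changes its prediction, from i₀+1 to i₀, and hence the empirical cost changes by (C_{y_{j+1}, i₀} − C_{y_{j+1}, i₀+1})/n, where C is the cost matrix and n the dataset size. -/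
/-! Moving `θ i₀` from `s x_j` up to `s x_{j+1}` changes whether `θ i₀` lies below a score `t`
only for `t ∈ (s x_j, s x_{j+1}]`, and since the scores are sorted and distinct that is the score
of `x_{j+1}` alone. At that score the predictor reads `i₀ + 1` before the move and `i₀` after it,
because the moved threshold now sits exactly on the score; the cost sum therefore changes in
that single summand. -/

open Finset

/-- The threshold predictor over `k` ordered labels: `f(x) = i` iff
`θ_{i-1} < s(x) ≤ θ_i` (with `θ₀ = -∞`, `θ_k = +∞`), expressed as
`1 +` the number of thresholds among `θ₁, …, θ_{k-1}` lying strictly below the score. -/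
noncomputable def thrLabel (k : ℕ) (θ : ℕ → ℝ) (t : ℝ) : ℕ :=
  1 + ((Finset.Icc 1 (k - 1)).filter (fun i => θ i < t)).card

theorem Fintype.sum_eq_sum_add_sub_of_eq_off {ι M : Type*} [Fintype ι] [AddCommGroup M]
    {f g : ι → M} (p : ι) (h : ∀ i, i ≠ p → g i = f i) :
    ∑ i, g i = ∑ i, f i + (g p - f p) := by
  classical
  have hoff : ∑ i ∈ univ.erase p, g i = ∑ i ∈ univ.erase p, f i :=
    Finset.sum_congr rfl fun i hi => h i (ne_of_mem_erase hi)
  rw [← add_sum_erase univ g (mem_univ p), ← add_sum_erase univ f (mem_univ p), hoff]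
  abel

theorem MonotoneOn.update_of_le_of_ge {α β : Type*} [PartialOrder α] [Preorder β] [DecidableEq α]
    {f : α → β} {s : Set α} {a : α} {b : β} (hf : MonotoneOn f s)
    (hlo : ∀ x ∈ s, x < a → f x ≤ b) (hhi : ∀ x ∈ s, a < x → b ≤ f x) :
    MonotoneOn (Function.update f a b) s := by
  intro x hx z hz hxz
  rcases eq_or_ne x a with rfl | hxa <;> rcases eq_or_ne z x with rfl | hzx
  · exact le_rfl
  · rw [Function.update_self, Function.update_of_ne hzx]
    exact hhi z hz (lt_of_le_of_ne hxz hzx.symm)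
  · exact le_rfl
  · rcases eq_or_ne z a with rfl | hza
    · rw [Function.update_self, Function.update_of_ne hxa]
      exact hlo x hx (lt_of_le_of_ne hxz hxa)
    · rw [Function.update_of_ne hxa, Function.update_of_ne hza]
      exact hf hx hz hxz

theorem StrictMono.eq_of_mem_Ioc_succ {β : Type*} [LinearOrder β] {n j : ℕ} {s : Fin n → β}
    (hs : StrictMono s) (hj : j + 1 < n) {l : Fin n}
    (hl : s l ∈ Set.Ioc (s ⟨j, Nat.lt_of_succ_lt hj⟩) (s ⟨j + 1, hj⟩)) : l = ⟨j + 1, hj⟩ := by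
  have hjl := hs.lt_iff_lt.1 hl.1
  have hlj := hs.le_iff_le.1 hl.2
  rw [Fin.lt_def] at hjl
  rw [Fin.le_def] at hlj
  ext
  simp only at hjl hlj ⊢
  omega

theorem thrLabel_update_of_lt_iff {k i₀ : ℕ} {θ : ℕ → ℝ} {a t : ℝ}
    (h : a < t ↔ θ i₀ < t) :
    thrLabel k (Function.update θ i₀ a) t = thrLabel k θ t := by
  unfold thrLabel
  congr 2
  refine filter_congr fun i _ => ?_
  rcases eq_or_ne i i₀ with rfl | hi
  · rwa [Function.update_self]
  · rw [Function.update_of_ne hi]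

theorem thrLabel_update_of_notMem_Ioc {k i₀ : ℕ} {θ : ℕ → ℝ} {a t : ℝ} (hle : θ i₀ ≤ a)
    (ht : t ∉ Set.Ioc (θ i₀) a) :
    thrLabel k (Function.update θ i₀ a) t = thrLabel k θ t := by
  refine thrLabel_update_of_lt_iff ?_
  rcases le_or_gt t (θ i₀) with htθ | htθ
  · exact iff_of_false (htθ.trans hle).not_gt htθ.not_gt
  · have hat : a < t := not_le.1 fun hta => ht ⟨htθ, hta⟩
    exact iff_of_true hat htθ

/-- The guards `1 ≤ m →` and `m + 1 ≤ k - 1 →` encode `θ 0 = -∞` and `θ k = +∞`. -/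
theorem thrLabel_eq_succ {k m : ℕ} {θ : ℕ → ℝ} {t : ℝ}
    (hθ : MonotoneOn θ (Set.Icc 1 (k - 1))) (hm : m ≤ k - 1)
    (hlo : 1 ≤ m → θ m < t) (hhi : m + 1 ≤ k - 1 → t ≤ θ (m + 1)) :
    thrLabel k θ t = m + 1 := by
  have hfilter : (Icc 1 (k - 1)).filter (fun i => θ i < t) = Icc 1 m := by
    ext i
    simp only [mem_filter, mem_Icc]
    constructor
    · rintro ⟨⟨hi1, hik⟩, hθi⟩
      refine ⟨hi1, not_lt.1 fun him => hθi.not_ge ?_⟩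
      exact (hhi (him.trans_le hik)).trans (hθ ⟨by omega, by omega⟩ ⟨hi1, hik⟩ him)
    · rintro ⟨hi1, him⟩
      exact ⟨⟨hi1, him.trans hm⟩,
        (hθ ⟨hi1, him.trans hm⟩ ⟨hi1.trans him, hm⟩ him).trans_lt (hlo (hi1.trans him))⟩
  rw [thrLabel, hfilter, Nat.card_Icc]
  omega

theorem thrLabel_threshold_eq {k i : ℕ} {θ : ℕ → ℝ} (hθ : MonotoneOn θ (Set.Icc 1 (k - 1)))
    (hi1 : 1 ≤ i) (hik : i ≤ k - 1) (hprev : 2 ≤ i → θ (i - 1) < θ i) :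
    thrLabel k θ (θ i) = i := by
  have hpred : i - 1 + 1 = i := Nat.sub_add_cancel hi1
  have h := thrLabel_eq_succ (m := i - 1) (t := θ i) hθ (by omega)
    (fun h => hprev (by omega)) (fun _ => by rw [hpred])
  rwa [hpred] at h

theorem threshold_right_move_general (n k : ℕ)
    (s : Fin n → ℝ) (hs : StrictMono s) (y : Fin n → ℕ) (C : ℕ → ℕ → ℝ)
    (θ : ℕ → ℝ)
    (hmono : ∀ i i' : ℕ, 1 ≤ i → i ≤ i' → i' ≤ k - 1 → θ i ≤ θ i')
    (i₀ j : ℕ) (hi₀l : 1 ≤ i₀) (hi₀u : i₀ ≤ k - 1) (hj : j + 1 < n)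
    (hθi₀ : θ i₀ = s ⟨j, Nat.lt_of_succ_lt hj⟩)
    (hnext : i₀ + 1 ≤ k - 1 → s ⟨j + 1, hj⟩ < θ (i₀ + 1)) :
    (∀ l : Fin n, l ≠ ⟨j + 1, hj⟩ →
        thrLabel k (Function.update θ i₀ (s ⟨j + 1, hj⟩)) (s l) = thrLabel k θ (s l)) ∧
    thrLabel k θ (s ⟨j + 1, hj⟩) = i₀ + 1 ∧
    thrLabel k (Function.update θ i₀ (s ⟨j + 1, hj⟩)) (s ⟨j + 1, hj⟩) = i₀ ∧
    (∑ l, C (y l) (thrLabel k (Function.update θ i₀ (s ⟨j + 1, hj⟩)) (s l))) / n =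
      (∑ l, C (y l) (thrLabel k θ (s l))) / n +
        (C (y ⟨j + 1, hj⟩) i₀ - C (y ⟨j + 1, hj⟩) (i₀ + 1)) / n := by
  set a := s ⟨j + 1, hj⟩
  have hθ : MonotoneOn θ (Set.Icc 1 (k - 1)) := fun i hi i' hi' h => hmono i i' hi.1 h hi'.2
  have hθa : θ i₀ < a := hθi₀ ▸ hs (Fin.mk_lt_mk.2 j.lt_succ_self)
  have hbelow : ∀ i ∈ Set.Icc 1 (k - 1), i ≤ i₀ → θ i < a := fun i hi hii₀ =>
    (hθ hi ⟨hi₀l, hi₀u⟩ hii₀).trans_lt hθa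
  have habove : ∀ i ∈ Set.Icc 1 (k - 1), i₀ < i → a < θ i := fun i hi hii₀ =>
    (hnext (hii₀.trans_le hi.2)).trans_le (hθ ⟨by omega, hii₀.trans_le hi.2⟩ hi hii₀)
  have hθ' : MonotoneOn (Function.update θ i₀ a) (Set.Icc 1 (k - 1)) :=
    hθ.update_of_le_of_ge (fun i hi h => (hbelow i hi h.le).le) (fun i hi h => (habove i hi h).le)
  have hothers : ∀ l : Fin n, l ≠ ⟨j + 1, hj⟩ →
      thrLabel k (Function.update θ i₀ a) (s l) = thrLabel k θ (s l) := fun l hl =>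
    thrLabel_update_of_notMem_Ioc hθa.le fun hmem => hl (hs.eq_of_mem_Ioc_succ hj (hθi₀ ▸ hmem))
  have hold : thrLabel k θ a = i₀ + 1 :=
    thrLabel_eq_succ hθ hi₀u (fun _ => hθa) (fun h => (hnext h).le)
  have hnew : thrLabel k (Function.update θ i₀ a) a = i₀ := by
    have h := thrLabel_threshold_eq hθ' hi₀l hi₀u fun h => by
      rw [Function.update_self, Function.update_of_ne (by omega)]
      exact hbelow _ ⟨by omega, by omega⟩ (by omega)
    rwa [Function.update_self] at h
  refine ⟨hothers, hold, hnew, ?_⟩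
  rw [Fintype.sum_eq_sum_add_sub_of_eq_off ⟨j + 1, hj⟩ fun l hl => by rw [hothers l hl],
    hold, hnew, add_div]

/-- A single right-move of one threshold: if threshold `θ_{i₀}`, located at the sorted
score `s(x_j)`, is moved to `s(x_{j+1})` (scores are sorted and distinct, and the move
respects `s(x_{j+1}) < θ_{i₀+1}`), then exactly the datapoint `x_{j+1}` changes its
prediction, from `i₀+1` to `i₀`, and the empirical cost changes by
`(C_{y_{j+1}, i₀} - C_{y_{j+1}, i₀+1})/n`. -/
theorem threshold_right_move (n k : ℕ) (hk : 2 ≤ k)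
    (s : Fin n → ℝ) (hs : StrictMono s) (y : Fin n → ℕ) (C : ℕ → ℕ → ℝ)
    (θ : ℕ → ℝ)
    (hmono : ∀ i i' : ℕ, 1 ≤ i → i ≤ i' → i' ≤ k - 1 → θ i ≤ θ i')
    (i₀ j : ℕ) (hi₀l : 1 ≤ i₀) (hi₀u : i₀ ≤ k - 1) (hj : j + 1 < n)
    (hθi₀ : θ i₀ = s ⟨j, Nat.lt_of_succ_lt hj⟩)
    (hnext : i₀ + 1 ≤ k - 1 → s ⟨j + 1, hj⟩ < θ (i₀ + 1)) :
    (∀ l : Fin n, l ≠ ⟨j + 1, hj⟩ →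
        thrLabel k (Function.update θ i₀ (s ⟨j + 1, hj⟩)) (s l) = thrLabel k θ (s l)) ∧
    thrLabel k θ (s ⟨j + 1, hj⟩) = i₀ + 1 ∧
    thrLabel k (Function.update θ i₀ (s ⟨j + 1, hj⟩)) (s ⟨j + 1, hj⟩) = i₀ ∧
    (∑ l, C (y l) (thrLabel k (Function.update θ i₀ (s ⟨j + 1, hj⟩)) (s l))) / n =
      (∑ l, C (y l) (thrLabel k θ (s l))) / n +
        (C (y ⟨j + 1, hj⟩) i₀ - C (y ⟨j + 1, hj⟩) (i₀ + 1)) / n :=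
  threshold_right_move_general n k s hs y C θ hmono i₀ j hi₀l hi₀u hj hθi₀ hnext
end
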